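/- arXiv:1012.5316 — 2 statements merged into one kernel-verified Lean document; each statement's English description precedes it below -/
import Mathlib

section
/- Let A, S, T be finite sets, let d₁ : (A → Z/2) → (S → Z/2) and d₂ : (S → Z/2) → (T → Z/2) be Z/2-linear maps with d₂ ∘ d₁ = 0, and let h > 0 be a real number such that for every β : S → Z/2 not in the range of d₁ one has ‖d₂β‖ ≥ h · ‖[β]‖. Let 0 < ε < 1 and 0 ≤ p ≤ 1, and let Y be a random subset of T including each element of T independently with probability p. Then the probability that there exists β : S → Z/2 not in the range of d₁ with ‖d₂β‖_Y ≤ (1−ε) · p · h · ‖[β]‖ is at most (1 + exp(−ε²ph/2))^{|S|} − 1. -/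
/-!
A bad subset `Y` is witnessed by a non-coboundary `β`, and replacing `β` by a minimal
representative `β + d₁ α` of its class changes neither `d₂ β` nor `‖[β]‖`; so a union bound over
the minimal non-coboundaries suffices. For such `β` the support `Z` of `d₂ β` has at least
`h‖β‖` points, and the Chernoff bound for `#(Y ∩ Z)` makes the bad event for `β` have
probability at most `q ^ ‖β‖` with `q = exp (-ε²ph/2)`. Summing `q ^ ‖β‖` over all nonzero `β`
gives `(1 + q) ^ |S| - 1`.
-/

open scoped Classical

/-- The support size of a `ZMod 2`-valued function on a finite set. -/
def cnorm {X : Type*} [Fintype X] (β : X → ZMod 2) : ℕ :=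
  (Finset.univ.filter fun x => β x ≠ 0).card

/-- The quotient norm `‖[β]‖ = min_{α} ‖β + d₁ α‖` associated to a linear map
`d₁ : (A → ZMod 2) → (S → ZMod 2)`. -/
noncomputable def qnormGen {A S : Type*} [Fintype S]
    (d₁ : (A → ZMod 2) →ₗ[ZMod 2] (S → ZMod 2)) (β : S → ZMod 2) : ℕ :=
  sInf {m | ∃ α : A → ZMod 2, m = cnorm (β + d₁ α)}

open Finset

section RandomSubset

variable {T : Type*} [Fintype T]

/-- The probability of `Y` under the product Bernoulli(`p`) measure on subsets of `T`. -/
def subsetWeight {R : Type*} [CommRing R] (p : R) (Y : Finset T) : R :=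
  p ^ #Y * (1 - p) ^ (Fintype.card T - #Y)

lemma subsetWeight_nonneg {p : ℝ} (hp0 : 0 ≤ p) (hp1 : p ≤ 1) (Y : Finset T) :
    0 ≤ subsetWeight p Y :=
  mul_nonneg (pow_nonneg hp0 _) (pow_nonneg (sub_nonneg.mpr hp1) _)

lemma sum_subsetWeight_mul_pow_card_filter {R : Type*} [CommRing R] (P : T → Prop)
    [DecidablePred P] (p x : R) :
    ∑ Y : Finset T, subsetWeight p Y * x ^ #{t ∈ Y | P t} = (p * x + (1 - p)) ^ #{t | P t} := by
  have hfactor : ∀ t, (if P t then p * x + (1 - p) else 1) =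
      p * (if P t then x else 1) + (1 - p) := fun t => by split_ifs <;> ring
  rw [← prod_const, prod_filter]
  simp only [hfactor, Fintype.prod_add, prod_mul_distrib, prod_const, ← prod_filter, card_compl,
    subsetWeight]
  exact sum_congr rfl fun Y _ => by ring

-- Markov's inequality for `exp (-θ · #{t ∈ Y | P t})`.
lemma subsetWeight_lower_tail_le_mgf {p : ℝ} (hp0 : 0 ≤ p) (hp1 : p ≤ 1) {θ : ℝ}
    (hθ : 0 ≤ θ) (P : T → Prop) [DecidablePred P] (c : ℝ) :
    ∑ Y : Finset T, (if (#{t ∈ Y | P t} : ℝ) ≤ c then subsetWeight p Y else 0) ≤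
      Real.exp (θ * c) * (p * Real.exp (-θ) + (1 - p)) ^ #{t | P t} := by
  rw [← sum_subsetWeight_mul_pow_card_filter, mul_sum]
  refine sum_le_sum fun Y _ => ?_
  have hw := subsetWeight_nonneg hp0 hp1 Y
  split_ifs with hY
  · have hone : 1 ≤ Real.exp (θ * c) * Real.exp (-θ) ^ #{t ∈ Y | P t} := by
      rw [← Real.exp_nat_mul, ← Real.exp_add]
      exact Real.one_le_exp (by nlinarith)
    nlinarith
  · positivity

end RandomSubset

lemma Real.exp_neg_le_one_sub_add_sq_div_two {x : ℝ} (hx : 0 ≤ x) :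
    Real.exp (-x) ≤ 1 - x + x ^ 2 / 2 := by
  have hquad := Real.quadratic_le_exp_of_nonneg hx
  rw [Real.exp_neg, inv_le_iff_one_le_mul₀ (by positivity)]
  -- `(1 + x + x²/2)(1 - x + x²/2) = 1 + x⁴/4`
  nlinarith [pow_nonneg hx 4, sq_nonneg (x - 1)]

lemma chernoff_exponent_le {h ε p : ℝ} (hh : 0 ≤ h) (hε : 0 ≤ ε) (hp0 : 0 ≤ p) (hp1 : p ≤ 1)
    {N m : ℕ} (hN : h * m ≤ N) :
    Real.exp (ε * ((1 - ε) * p * h * m)) * (p * Real.exp (-ε) + (1 - p)) ^ N ≤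
      Real.exp (-(ε ^ 2) * p * h / 2) ^ m := by
  have hbase : p * Real.exp (-ε) + (1 - p) ≤ Real.exp (p * (Real.exp (-ε) - 1)) := by
    linarith [Real.add_one_le_exp (p * (Real.exp (-ε) - 1))]
  have hdrop : p * (Real.exp (-ε) - 1) ≤ p * (-ε + ε ^ 2 / 2) := by
    nlinarith [Real.exp_neg_le_one_sub_add_sq_div_two hε]
  have hneg : p * (Real.exp (-ε) - 1) ≤ 0 :=
    mul_nonpos_of_nonneg_of_nonpos hp0 (by linarith [Real.exp_le_one_iff.mpr (neg_nonpos.mpr hε)])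
  calc Real.exp (ε * ((1 - ε) * p * h * m)) * (p * Real.exp (-ε) + (1 - p)) ^ N
      ≤ Real.exp (ε * ((1 - ε) * p * h * m)) * Real.exp (p * (Real.exp (-ε) - 1)) ^ N := by
        gcongr
    _ = Real.exp (ε * ((1 - ε) * p * h * m) + N * (p * (Real.exp (-ε) - 1))) := by
        rw [← Real.exp_nat_mul, Real.exp_add]
    _ ≤ Real.exp (m * (-(ε ^ 2) * p * h / 2)) := by
        gcongr
        have hhm : 0 ≤ h * m := by positivity
        nlinarith [mul_le_mul_of_nonpos_right hN hneg, mul_le_mul_of_nonneg_left hdrop hhm]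
    _ = Real.exp (-(ε ^ 2) * p * h / 2) ^ m := Real.exp_nat_mul _ m

lemma subsetWeight_lower_tail_le {T : Type*} [Fintype T] {h ε p : ℝ} (hh : 0 ≤ h)
    (hε : 0 ≤ ε) (hp0 : 0 ≤ p) (hp1 : p ≤ 1) (P : T → Prop) [DecidablePred P] {m : ℕ}
    (hP : h * m ≤ #{t | P t}) :
    ∑ Y : Finset T,
        (if (#{t ∈ Y | P t} : ℝ) ≤ (1 - ε) * p * h * m then subsetWeight p Y else 0) ≤
      Real.exp (-(ε ^ 2) * p * h / 2) ^ m :=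
  (subsetWeight_lower_tail_le_mgf hp0 hp1 hε P _).trans (chernoff_exponent_le hh hε hp0 hp1 hP)

lemma ite_le_sum_ite_of_exists {ι : Type*} {s : Finset ι} {P : ι → Prop} [DecidablePred P]
    {Q : Prop} [Decidable Q] {w : ℝ} (hw : 0 ≤ w) (hQ : Q → ∃ i ∈ s, P i) :
    (if Q then w else 0) ≤ ∑ i ∈ s, if P i then w else 0 := by
  have hterm_nonneg : ∀ i ∈ s, 0 ≤ if P i then w else 0 := fun _ _ => by positivity
  split_ifs with hq
  · obtain ⟨i, hi, hPi⟩ := hQ hq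
    exact le_of_eq_of_le (if_pos hPi).symm (single_le_sum hterm_nonneg hi)
  · exact sum_nonneg hterm_nonneg

section Cochains

variable {A S : Type*} [Fintype S]

lemma cnorm_zero : cnorm (0 : S → ZMod 2) = 0 := by
  simp [cnorm]

lemma sum_pow_cnorm {R : Type*} [CommSemiring R] (q : R) :
    ∑ β : S → ZMod 2, q ^ cnorm β = (1 + q) ^ Fintype.card S := by
  have hfactor : ∀ β : S → ZMod 2, q ^ cnorm β = ∏ s, if β s ≠ 0 then q else 1 := fun β => by
    rw [prod_ite, prod_const_one, mul_one, prod_const]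
    rfl
  have hfiber : ∑ v : ZMod 2, (if v ≠ 0 then q else 1) = 1 + q := by
    rw [show (univ : Finset (ZMod 2)) = {0, 1} from rfl, sum_pair zero_ne_one]
    simp
  simp only [hfactor]
  rw [← hfiber, ← card_univ, ← prod_const, Fintype.prod_sum]

lemma sum_pow_cnorm_of_ne_zero {R : Type*} [CommRing R] (q : R) :
    ∑ β ∈ univ.filter fun β : S → ZMod 2 => β ≠ 0, q ^ cnorm β = (1 + q) ^ Fintype.card S - 1 := by
  rw [filter_ne', ← sum_pow_cnorm, ← add_sum_erase _ _ (mem_univ 0), cnorm_zero, pow_zero,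
    add_sub_cancel_left]

variable (d₁ : (A → ZMod 2) →ₗ[ZMod 2] (S → ZMod 2))

lemma exists_cnorm_add_eq_qnormGen (β : S → ZMod 2) :
    ∃ α : A → ZMod 2, cnorm (β + d₁ α) = qnormGen d₁ β :=
  (Nat.sInf_mem ⟨_, 0, rfl⟩ : qnormGen d₁ β ∈ {m | ∃ α, m = cnorm (β + d₁ α)}).imp
    fun _ => Eq.symm

lemma qnormGen_add_apply (β : S → ZMod 2) (α : A → ZMod 2) :
    qnormGen d₁ (β + d₁ α) = qnormGen d₁ β := by
  unfold qnormGen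
  congr 1
  ext m
  constructor
  · rintro ⟨α', rfl⟩
    exact ⟨α + α', by rw [map_add, add_assoc]⟩
  · rintro ⟨α', rfl⟩
    exact ⟨α' - α, by rw [map_sub, add_assoc, add_sub_cancel]⟩

noncomputable def minimalNonCoboundaries : Finset (S → ZMod 2) :=
  {β | β ∉ Set.range d₁ ∧ cnorm β = qnormGen d₁ β}

lemma mem_minimalNonCoboundaries {β : S → ZMod 2} :
    β ∈ minimalNonCoboundaries d₁ ↔ β ∉ Set.range d₁ ∧ cnorm β = qnormGen d₁ β := by
  simp [minimalNonCoboundaries]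

lemma minimalNonCoboundaries_subset :
    minimalNonCoboundaries d₁ ⊆ univ.filter fun β : S → ZMod 2 => β ≠ 0 := fun β hβ => by
  rw [mem_minimalNonCoboundaries] at hβ
  rw [mem_filter]
  exact ⟨mem_univ β, by rintro rfl; exact hβ.1 ⟨0, map_zero d₁⟩⟩

lemma exists_mem_minimalNonCoboundaries {T : Type*}
    {d₂ : (S → ZMod 2) →ₗ[ZMod 2] (T → ZMod 2)} (hdd : ∀ α, d₂ (d₁ α) = 0)
    {β : S → ZMod 2} (hβ : β ∉ Set.range d₁) :
    ∃ β' ∈ minimalNonCoboundaries d₁, d₂ β' = d₂ β ∧ qnormGen d₁ β' = qnormGen d₁ β := by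
  obtain ⟨α, hα⟩ := exists_cnorm_add_eq_qnormGen d₁ β
  have hnot : β + d₁ α ∉ Set.range d₁ := fun ⟨γ, hγ⟩ =>
    hβ ⟨γ - α, by rw [map_sub, hγ, add_sub_cancel_right]⟩
  exact ⟨β + d₁ α, (mem_minimalNonCoboundaries d₁).mpr ⟨hnot, by rw [qnormGen_add_apply, hα]⟩,
    by rw [map_add, hdd, add_zero], qnormGen_add_apply d₁ β α⟩

lemma exists_mem_minimalNonCoboundaries_of_exists {T : Type*}
    {d₂ : (S → ZMod 2) →ₗ[ZMod 2] (T → ZMod 2)} (hdd : ∀ α, d₂ (d₁ α) = 0)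
    {E : (T → ZMod 2) → ℕ → Prop} (hE : ∃ β, β ∉ Set.range d₁ ∧ E (d₂ β) (qnormGen d₁ β)) :
    ∃ β ∈ minimalNonCoboundaries d₁, E (d₂ β) (qnormGen d₁ β) := by
  obtain ⟨β, hβ, hEβ⟩ := hE
  obtain ⟨β', hβ'M, hd, hq⟩ := exists_mem_minimalNonCoboundaries d₁ hdd hβ
  exact ⟨β', hβ'M, by rwa [hd, hq]⟩

end Cochains

theorem random_subcomplex_expansion_general
    {A S T : Type*} [Fintype A] [Fintype S] [Fintype T]
    (d₁ : (A → ZMod 2) →ₗ[ZMod 2] (S → ZMod 2))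
    (d₂ : (S → ZMod 2) →ₗ[ZMod 2] (T → ZMod 2))
    (hdd : ∀ α : A → ZMod 2, d₂ (d₁ α) = 0)
    (h : ℝ) (hpos : 0 < h)
    (hexp : ∀ β : S → ZMod 2, β ∉ Set.range d₁ →
      (cnorm (d₂ β) : ℝ) ≥ h * (qnormGen d₁ β : ℝ))
    (ε p : ℝ) (hε0 : 0 < ε) (hp0 : 0 ≤ p) (hp1 : p ≤ 1) :
    (∑ Y : Finset T,
        if ∃ β : S → ZMod 2, β ∉ Set.range d₁ ∧
            ((Y.filter fun t => d₂ β t ≠ 0).card : ℝ) ≤ (1 - ε) * p * h * (qnormGen d₁ β : ℝ)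
          then p ^ Y.card * (1 - p) ^ (Fintype.card T - Y.card) else 0)
      ≤ (1 + Real.exp (-(ε ^ 2) * p * h / 2)) ^ (Fintype.card S) - 1 := by
  set q := Real.exp (-(ε ^ 2) * p * h / 2)
  set M := minimalNonCoboundaries d₁
  calc _ ≤ ∑ Y : Finset T, ∑ β ∈ M,
          if ((Y.filter fun t => d₂ β t ≠ 0).card : ℝ) ≤ (1 - ε) * p * h * (qnormGen d₁ β : ℝ)
            then subsetWeight p Y else 0 :=
        sum_le_sum fun Y _ => ite_le_sum_ite_of_exists (subsetWeight_nonneg hp0 hp1 Y)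
          (exists_mem_minimalNonCoboundaries_of_exists d₁ hdd
            (E := fun γ m => ((Y.filter fun t => γ t ≠ 0).card : ℝ) ≤ (1 - ε) * p * h * m))
    _ = ∑ β ∈ M, ∑ Y : Finset T,
          if ((Y.filter fun t => d₂ β t ≠ 0).card : ℝ) ≤ (1 - ε) * p * h * (qnormGen d₁ β : ℝ)
            then subsetWeight p Y else 0 := sum_comm
    _ ≤ ∑ β ∈ M, q ^ cnorm β := sum_le_sum fun β hβ => by
        obtain ⟨hβ, hmin⟩ := (mem_minimalNonCoboundaries d₁).mp hβ
        rw [hmin]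
        exact subsetWeight_lower_tail_le hpos.le hε0.le hp0 hp1 _ (hexp β hβ)
    _ ≤ ∑ β ∈ univ.filter fun β : S → ZMod 2 => β ≠ 0, q ^ cnorm β :=
        sum_le_sum_of_subset_of_nonneg (minimalNonCoboundaries_subset d₁) fun _ _ _ => by positivity
    _ = (1 + q) ^ Fintype.card S - 1 := sum_pow_cnorm_of_ne_zero q

/-- the probabilistic heart of the main theorem. Let `d₁`, `d₂`
be consecutive `ZMod 2` coboundary maps on finite sets with `d₂ ∘ d₁ = 0` and
coboundary expansion at least `h > 0` (every non-coboundary `β` satisfies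
`‖d₂β‖ ≥ h·‖[β]‖`). For `0 < ε < 1` and `0 ≤ p ≤ 1`, the probability — for a
random subset `Y ⊆ T`, each element kept independently with probability `p`,
expressed as a weighted sum over all subsets — that some non-coboundary `β`
has `‖d₂β‖_Y ≤ (1-ε)·p·h·‖[β]‖ ` is at most `(1 + e^{-ε²ph/2})^{|S|} - 1`. -/
theorem random_subcomplex_expansion
    {A S T : Type*} [Fintype A] [Fintype S] [Fintype T] [DecidableEq T]
    (d₁ : (A → ZMod 2) →ₗ[ZMod 2] (S → ZMod 2))
    (d₂ : (S → ZMod 2) →ₗ[ZMod 2] (T → ZMod 2))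
    (hdd : ∀ α : A → ZMod 2, d₂ (d₁ α) = 0)
    (h : ℝ) (hpos : 0 < h)
    (hexp : ∀ β : S → ZMod 2, β ∉ Set.range d₁ →
      (cnorm (d₂ β) : ℝ) ≥ h * (qnormGen d₁ β : ℝ))
    (ε p : ℝ) (hε0 : 0 < ε) (hε1 : ε < 1) (hp0 : 0 ≤ p) (hp1 : p ≤ 1) :
    (∑ Y : Finset T,
        if ∃ β : S → ZMod 2, β ∉ Set.range d₁ ∧
            ((Y.filter fun t => d₂ β t ≠ 0).card : ℝ) ≤ (1 - ε) * p * h * (qnormGen d₁ β : ℝ)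
          then p ^ Y.card * (1 - p) ^ (Fintype.card T - Y.card) else 0)
      ≤ (1 + Real.exp (-(ε ^ 2) * p * h / 2)) ^ (Fintype.card S) - 1 :=
  random_subcomplex_expansion_general d₁ d₂ hdd h hpos hexp ε p hε0 hp0 hp1
end

section
/- Let A, S, T be nonempty finite sets and let d₁ : (A → Z/2) → (S → Z/2) and d₂ : (S → Z/2) → (T → Z/2) be Z/2-linear maps with d₂ ∘ d₁ = 0. Suppose ker d₂ = range d₁ (i.e., the k-th cohomology vanishes), that some β : S → Z/2 is not in the range of d₁, and that d₂ is not identically zero. Define h = min over β not in range d₁ of ‖d₂β‖/‖[β]‖, and define the filling norm ‖d⁻¹‖ as the smallest c ≥ 0 such that for every β : S → Z/2 there exists α : S → Z/2 with d₂α = d₂β and ‖α‖/|S| ≤ c·‖d₂β‖/|T|. Then h = |T|/(‖d⁻¹‖·|S|). -/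
/-!
Under exactness, the primitives of `d₂ β` are exactly the cochains `β + d₁ α`, so the quotient
norm `‖[β]‖` is the least size of a primitive of `d₂ β`. A constant `c` is therefore a filling
constant iff `‖[β]‖ |T| ≤ c ‖d₂ β‖ |S|` for every non-coboundary `β`, i.e. iff
`c ≥ (|T| / |S|) / r` for every expansion ratio `r = ‖d₂ β‖ / ‖[β]‖`. The least such `c` is
`(|T| / |S|) / h`, where `h` is the least ratio, which exists since there are finitely many.
-/

theorem sInf_setOf_div_le_eq {X : Set ℝ} (hfin : X.Finite) (hne : X.Nonempty)
    (hpos : ∀ x ∈ X, 0 < x) {k : ℝ} (hk : 0 ≤ k) :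
    sInf {c : ℝ | 0 ≤ c ∧ ∀ x ∈ X, k / x ≤ c} = k / sInf X := by
  have hmem : sInf X ∈ X := hne.csInf_mem hfin
  have hmin : ∀ x ∈ X, k / x ≤ k / sInf X := fun x hx =>
    div_le_div_of_nonneg_left hk (hpos _ hmem) (csInf_le hfin.bddBelow hx)
  have hset : {c : ℝ | 0 ≤ c ∧ ∀ x ∈ X, k / x ≤ c} = Set.Ici (k / sInf X) := by
    ext c
    refine ⟨fun hc => hc.2 _ hmem, fun hc => ⟨?_, fun x hx => (hmin x hx).trans hc⟩⟩
    exact (div_nonneg hk (hpos _ hmem).le).trans hc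
  rw [hset, csInf_Ici]

theorem cnorm_eq_zero_iff {X : Type*} [Fintype X] {γ : X → ZMod 2} : cnorm γ = 0 ↔ γ = 0 := by
  simp [cnorm, Finset.filter_eq_empty_iff, funext_iff]

theorem cnorm_map_pos {A S T : Type*} [Fintype T]
    {d₁ : (A → ZMod 2) →ₗ[ZMod 2] (S → ZMod 2)} {d₂ : (S → ZMod 2) →ₗ[ZMod 2] (T → ZMod 2)}
    (hker : ∀ β, d₂ β = 0 → β ∈ Set.range d₁) {β : S → ZMod 2}
    (hβ : β ∉ Set.range d₁) : 0 < cnorm (d₂ β) :=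
  Nat.pos_of_ne_zero fun h => hβ (hker β (cnorm_eq_zero_iff.mp h))

section Cochains

variable {A S T : Type*} [Fintype S]
  (d₁ : (A → ZMod 2) →ₗ[ZMod 2] (S → ZMod 2)) (d₂ : (S → ZMod 2) →ₗ[ZMod 2] (T → ZMod 2))

theorem exists_qnormGen_eq (β : S → ZMod 2) : ∃ α, qnormGen d₁ β = cnorm (β + d₁ α) :=
  Nat.sInf_mem (s := {m | ∃ α : A → ZMod 2, m = cnorm (β + d₁ α)}) ⟨_, 0, rfl⟩

theorem qnormGen_le (β : S → ZMod 2) (α : A → ZMod 2) : qnormGen d₁ β ≤ cnorm (β + d₁ α) :=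
  Nat.sInf_le ⟨α, rfl⟩

theorem qnormGen_pos {β : S → ZMod 2} (hβ : β ∉ Set.range d₁) : 0 < qnormGen d₁ β := by
  obtain ⟨α, hα⟩ := exists_qnormGen_eq d₁ β
  refine Nat.pos_of_ne_zero fun h => hβ ⟨-α, ?_⟩
  rw [h, eq_comm, cnorm_eq_zero_iff] at hα
  rw [map_neg, eq_comm]
  exact eq_neg_of_add_eq_zero_left hα

theorem qnormGen_eq_zero_of_mem_range {β : S → ZMod 2} (hβ : β ∈ Set.range d₁) :
    qnormGen d₁ β = 0 := by
  obtain ⟨α, rfl⟩ := hβ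
  have := qnormGen_le d₁ (d₁ α) (-α)
  rwa [map_neg, add_neg_cancel, cnorm_eq_zero_iff.mpr rfl, Nat.le_zero] at this

theorem qnormGen_le_cnorm_of_map_eq (hker : ∀ β, d₂ β = 0 → β ∈ Set.range d₁)
    {α β : S → ZMod 2} (h : d₂ α = d₂ β) : qnormGen d₁ β ≤ cnorm α := by
  obtain ⟨a, ha⟩ := hker (α - β) (by rw [map_sub, h, sub_self])
  convert qnormGen_le d₁ β a
  rw [ha]
  abel

theorem exists_map_eq_cnorm_eq_qnormGen (hdd : ∀ α, d₂ (d₁ α) = 0) (β : S → ZMod 2) :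
    ∃ α, d₂ α = d₂ β ∧ cnorm α = qnormGen d₁ β := by
  obtain ⟨a, ha⟩ := exists_qnormGen_eq d₁ β
  exact ⟨β + d₁ a, by rw [map_add, hdd, add_zero], ha.symm⟩

theorem exists_map_eq_div_le_iff (hdd : ∀ α, d₂ (d₁ α) = 0)
    (hker : ∀ β, d₂ β = 0 → β ∈ Set.range d₁) (β : S → ZMod 2) {s y : ℝ} (hs : 0 ≤ s) :
    (∃ α, d₂ α = d₂ β ∧ (cnorm α : ℝ) / s ≤ y) ↔ (qnormGen d₁ β : ℝ) / s ≤ y := by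
  constructor
  · rintro ⟨α, hα, hle⟩
    have : (qnormGen d₁ β : ℝ) ≤ cnorm α := by
      exact_mod_cast qnormGen_le_cnorm_of_map_eq d₁ d₂ hker hα
    exact (div_le_div_of_nonneg_right this hs).trans hle
  · intro hle
    obtain ⟨α, hα, hnorm⟩ := exists_map_eq_cnorm_eq_qnormGen d₁ d₂ hdd β
    exact ⟨α, hα, by rwa [hnorm]⟩

/-- Their infimum is the expansion constant `h`. -/
def expansionRatios [Fintype T] : Set ℝ :=
  {x | ∃ β : S → ZMod 2, β ∉ Set.range d₁ ∧ x = (cnorm (d₂ β) : ℝ) / (qnormGen d₁ β : ℝ)}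

/-- Their infimum is Gromov's filling norm `‖d₂⁻¹‖`. -/
def fillingConstants [Fintype T] : Set ℝ :=
  {c | 0 ≤ c ∧ ∀ β : S → ZMod 2, ∃ α : S → ZMod 2, d₂ α = d₂ β ∧
    (cnorm α : ℝ) / (Fintype.card S : ℝ) ≤ c * (cnorm (d₂ β) : ℝ) / (Fintype.card T : ℝ)}

theorem expansionRatios_finite [Fintype T] : (expansionRatios d₁ d₂).Finite := by
  refine (Set.finite_range fun β : S → ZMod 2 =>
    (cnorm (d₂ β) : ℝ) / (qnormGen d₁ β : ℝ)).subset ?_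
  rintro x ⟨β, -, rfl⟩
  exact ⟨β, rfl⟩

theorem pos_of_mem_expansionRatios [Fintype T] (hker : ∀ β, d₂ β = 0 → β ∈ Set.range d₁)
    {x : ℝ} (hx : x ∈ expansionRatios d₁ d₂) : 0 < x := by
  obtain ⟨β, hβ, rfl⟩ := hx
  have hn := cnorm_map_pos hker hβ
  have hq := qnormGen_pos d₁ hβ
  positivity

theorem fillingConstants_eq [Fintype T] [Nonempty S] [Nonempty T] (hdd : ∀ α, d₂ (d₁ α) = 0)
    (hker : ∀ β, d₂ β = 0 → β ∈ Set.range d₁) :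
    fillingConstants d₂ = {c | 0 ≤ c ∧ ∀ x ∈ expansionRatios d₁ d₂,
      (Fintype.card T : ℝ) / Fintype.card S / x ≤ c} := by
  have hS : (0 : ℝ) < Fintype.card S := by exact_mod_cast Fintype.card_pos
  have hT : (0 : ℝ) < Fintype.card T := by exact_mod_cast Fintype.card_pos
  ext c
  simp only [fillingConstants, expansionRatios, Set.mem_ofPred_eq,
    exists_map_eq_div_le_iff d₁ d₂ hdd hker _ hS.le, forall_exists_index, and_imp]
  rw [forall_comm]
  refine and_congr_right fun hc => forall_congr' fun β => ?_
  by_cases hβ : β ∈ Set.range d₁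
  · simp only [hβ, not_true_eq_false, false_imp_iff, implies_true, iff_true,
      qnormGen_eq_zero_of_mem_range d₁ hβ, Nat.cast_zero, zero_div]
    positivity
  · have hq : (0 : ℝ) < qnormGen d₁ β := by exact_mod_cast qnormGen_pos d₁ hβ
    have hn : (0 : ℝ) < cnorm (d₂ β) := by exact_mod_cast cnorm_map_pos hker hβ
    simp only [hβ, not_false_eq_true, forall_const, forall_eq]
    rw [div_le_div_iff₀ hS hT, div_le_iff₀ (by positivity)]
    field_simp

end Cochains

theorem expansion_eq_filling_norm_general
    {A S T : Type*} [Fintype S] [Fintype T]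
    [Nonempty S] [Nonempty T]
    (d₁ : (A → ZMod 2) →ₗ[ZMod 2] (S → ZMod 2))
    (d₂ : (S → ZMod 2) →ₗ[ZMod 2] (T → ZMod 2))
    (hdd : ∀ α : A → ZMod 2, d₂ (d₁ α) = 0)
    (hker : ∀ β : S → ZMod 2, d₂ β = 0 → β ∈ Set.range d₁)
    (hex : ∃ β : S → ZMod 2, β ∉ Set.range d₁) :
    sInf {x : ℝ | ∃ β : S → ZMod 2, β ∉ Set.range d₁ ∧
        x = (cnorm (d₂ β) : ℝ) / (qnormGen d₁ β : ℝ)}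
      = (Fintype.card T : ℝ) /
        (sInf {c : ℝ | 0 ≤ c ∧ ∀ β : S → ZMod 2, ∃ α : S → ZMod 2, d₂ α = d₂ β ∧
            (cnorm α : ℝ) / (Fintype.card S : ℝ) ≤ c * (cnorm (d₂ β) : ℝ) / (Fintype.card T : ℝ)}
          * (Fintype.card S : ℝ)) := by
  change sInf (expansionRatios d₁ d₂) = _ / (sInf (fillingConstants d₂) * _)
  have hS : (0 : ℝ) < Fintype.card S := by exact_mod_cast Fintype.card_pos
  have hT : (0 : ℝ) < Fintype.card T := by exact_mod_cast Fintype.card_pos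
  have hfin := expansionRatios_finite d₁ d₂
  have hne : (expansionRatios d₁ d₂).Nonempty := by
    obtain ⟨β, hβ⟩ := hex
    exact ⟨_, β, hβ, rfl⟩
  have hpos : ∀ x ∈ expansionRatios d₁ d₂, 0 < x := fun _ =>
    pos_of_mem_expansionRatios d₁ d₂ hker
  have hh : 0 < sInf (expansionRatios d₁ d₂) := hpos _ (hne.csInf_mem hfin)
  rw [fillingConstants_eq d₁ d₂ hdd hker, sInf_setOf_div_le_eq hfin hne hpos (by positivity)]
  field_simp

/-- comparison between coboundary expansion and Gromov's filling
norm. Let `d₁`, `d₂` be consecutive `ZMod 2` coboundary maps on nonempty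
finite sets `A`, `S`, `T` with `d₂ ∘ d₁ = 0`, vanishing cohomology
(`ker d₂ = range d₁`), some non-coboundary `β`, and `d₂ ≠ 0`. With
`h = min_{β ∉ range d₁} ‖d₂β‖/‖[β]‖` and the filling norm `‖d⁻¹‖` defined as
the smallest `c ≥ 0` such that every coboundary `d₂β` has a primitive `α`
(`d₂α = d₂β`) with `‖α‖/|S| ≤ c·‖d₂β‖/|T|`, we have `h = |T|/(‖d⁻¹‖·|S|)`. -/
theorem expansion_eq_filling_norm
    {A S T : Type*} [Fintype A] [Fintype S] [Fintype T]
    [Nonempty A] [Nonempty S] [Nonempty T]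
    (d₁ : (A → ZMod 2) →ₗ[ZMod 2] (S → ZMod 2))
    (d₂ : (S → ZMod 2) →ₗ[ZMod 2] (T → ZMod 2))
    (hdd : ∀ α : A → ZMod 2, d₂ (d₁ α) = 0)
    (hker : ∀ β : S → ZMod 2, d₂ β = 0 → β ∈ Set.range d₁)
    (hex : ∃ β : S → ZMod 2, β ∉ Set.range d₁)
    (hd₂ : d₂ ≠ 0) :
    sInf {x : ℝ | ∃ β : S → ZMod 2, β ∉ Set.range d₁ ∧
        x = (cnorm (d₂ β) : ℝ) / (qnormGen d₁ β : ℝ)}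
      = (Fintype.card T : ℝ) /
        (sInf {c : ℝ | 0 ≤ c ∧ ∀ β : S → ZMod 2, ∃ α : S → ZMod 2, d₂ α = d₂ β ∧
            (cnorm α : ℝ) / (Fintype.card S : ℝ) ≤ c * (cnorm (d₂ β) : ℝ) / (Fintype.card T : ℝ)}
          * (Fintype.card S : ℝ)) :=
  expansion_eq_filling_norm_general d₁ d₂ hdd hker hex
end
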